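/- arXiv:2408.00173 — 4 statements merged into one kernel-verified Lean document; each statement's English description precedes it below -/
import Mathlib

section
/- Let f be a polymatroid function on E, s ∈ ℝ^E_{>0}, m ∈ ℝ^E_{≥0}, and α = min{h > 0 : s ∈ h·P_f}. For h ≥ α let A_h = {z ∈ ℝ^E_{≥0} : s + z ∈ h·B_f}, and let z*_h minimize m·z over A_h. Then m·z*_h ≥ m·z*_α for every h ≥ α. In particular, the polymatroid reinforcement problem min{m·z : z ≥ 0, s+z ∈ h·B_f for some h > 0} is attained on A_α. -/
/-!
Let `z ∈ A_h` with `h > 0`; minimality of `α` forces `α ≤ h`. Among the `x` with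
`s ≤ x ≤ s + z` and `x ∈ α·P_f` take one maximizing `x(E)`. Each coordinate where
`x < s + z` lies in an `x`-tight set, and by submodularity tight sets are closed under
union, so the union `T` of all tight sets is tight and `x = s + z` off `T`. Hence
`x(E) = α f(T) + (s + z)(E ∖ T) ≥ α f(T) + h (f(E) - f(T)) ≥ α f(E)`, using monotonicity
and `α ≤ h`. So `x ∈ α·B_f`, and `x - s ∈ A_α` costs at most `m·z` because `m ≥ 0`.
-/

open Finset Filter Topology
open scoped Pointwise

section SubmodularPolyhedron

variable {E : Type*} {g : Finset E → ℝ} {x : E → ℝ}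

def submodularPolyhedron (g : Finset E → ℝ) : Set (E → ℝ) :=
  {x | ∀ A : Finset E, ∑ e ∈ A, x e ≤ g A}

theorem isClosed_submodularPolyhedron (g : Finset E → ℝ) :
    IsClosed (submodularPolyhedron g) := by
  simp only [submodularPolyhedron, Set.ofPred_forall]
  exact isClosed_iInter fun A =>
    isClosed_le (continuous_finsetSum _ fun e _ => continuous_apply e) continuous_const

variable [DecidableEq E]

theorem sum_union_eq_of_submodular
    (hg : ∀ A B : Finset E, g (A ∩ B) + g (A ∪ B) ≤ g A + g B)
    (hx : x ∈ submodularPolyhedron g) {A B : Finset E} (hA : ∑ e ∈ A, x e = g A)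
    (hB : ∑ e ∈ B, x e = g B) : ∑ e ∈ A ∪ B, x e = g (A ∪ B) := by
  have := sum_union_inter (s₁ := A) (s₂ := B) (f := x)
  linarith [hg A B, hx (A ∪ B), hx (A ∩ B)]

theorem sum_sup_eq_of_submodular (hg0 : g ∅ = 0)
    (hg : ∀ A B : Finset E, g (A ∩ B) + g (A ∪ B) ≤ g A + g B)
    (hx : x ∈ submodularPolyhedron g) {𝒜 : Finset (Finset E)}
    (h𝒜 : ∀ A ∈ 𝒜, ∑ e ∈ A, x e = g A) :
    ∑ e ∈ 𝒜.sup id, x e = g (𝒜.sup id) := by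
  induction 𝒜 using Finset.induction_on with
  | empty => simp [hg0]
  | insert A 𝒜 _ ih =>
    rw [sup_insert]
    exact sum_union_eq_of_submodular hg hx (h𝒜 A (mem_insert_self A 𝒜))
      (ih fun B hB => h𝒜 B (mem_insert_of_mem hB))

variable [Fintype E] {lo hi : E → ℝ}

theorem exists_tight_of_isMaxOn_sum (hx : x ∈ Set.Icc lo hi ∩ submodularPolyhedron g)
    (hmax : IsMaxOn (fun y : E → ℝ => ∑ e, y e) (Set.Icc lo hi ∩ submodularPolyhedron g) x)
    {e : E} (he : x e < hi e) : ∃ A : Finset E, e ∈ A ∧ ∑ a ∈ A, x a = g A := by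
  by_contra! hne
  have hslack : ∀ A : Finset E, e ∈ A → 0 < g A - ∑ a ∈ A, x a := fun A hA =>
    sub_pos.2 ((hx.2 A).lt_of_ne (hne A hA))
  have hsmall : ∀ᶠ ε in 𝓝 (0 : ℝ),
      ε ≤ hi e - x e ∧ ∀ A : Finset E, e ∈ A → ε ≤ g A - ∑ a ∈ A, x a :=
    (eventually_le_nhds (sub_pos.2 he)).and <| eventually_all.2 fun A =>
      if hA : e ∈ A then (eventually_le_nhds (hslack A hA)).mono fun _ h _ => h
      else .of_forall fun _ h => absurd h hA
  obtain ⟨ε, ⟨hεe, hεA⟩, hε⟩ := ((hsmall.filter_mono nhdsWithin_le_nhds).and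
    (self_mem_nhdsWithin (s := Set.Ioi 0))).exists
  have hsum (A : Finset E) :
      ∑ a ∈ A, (x + Pi.single e ε : E → ℝ) a =
        ∑ a ∈ A, x a + if e ∈ A then ε else 0 := by
    simp only [Pi.add_apply, sum_add_distrib, sum_pi_single']
  have hbumped : x + Pi.single e ε ∈ Set.Icc lo hi ∩ submodularPolyhedron g := by
    refine ⟨⟨hx.1.1.trans (le_add_of_nonneg_right (Pi.single_nonneg.2 (le_of_lt hε))),
      fun a => ?_⟩, fun A => ?_⟩
    · rcases eq_or_ne a e with rfl | hae
      · simp only [Pi.add_apply, Pi.single_eq_same]; linarith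
      · simpa [Pi.single_eq_of_ne hae] using hx.1.2 a
    · rw [hsum]
      split_ifs with heA
      · linarith [hεA A heA]
      · simpa using hx.2 A
  have := hmax hbumped
  simp only [Set.mem_ofPred_eq, hsum univ, if_pos (mem_univ e)] at this
  linarith

theorem exists_mem_Icc_sum_eq (hg0 : g ∅ = 0)
    (hg : ∀ A B : Finset E, g (A ∩ B) + g (A ∪ B) ≤ g A + g B)
    (hlohi : lo ≤ hi) (hlo : lo ∈ submodularPolyhedron g)
    (hcut : ∀ T : Finset E, g univ ≤ g T + ∑ e ∈ Tᶜ, hi e) :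
    ∃ x ∈ Set.Icc lo hi ∩ submodularPolyhedron g, ∑ e, x e = g univ := by
  obtain ⟨x, hxQ, hmax⟩ := (isCompact_Icc.inter_right
    (isClosed_submodularPolyhedron g)).exists_isMaxOn ⟨lo, ⟨le_rfl, hlohi⟩, hlo⟩
    (continuous_finsetSum univ fun e _ => continuous_apply e).continuousOn
  set T := ({A | ∑ e ∈ A, x e = g A} : Finset (Finset E)).sup id
  have hT : ∑ e ∈ T, x e = g T :=
    sum_sup_eq_of_submodular hg0 hg hxQ.2 fun A hA => (mem_filter.1 hA).2
  have hTc : ∀ e ∉ T, x e = hi e := fun e heT => by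
    by_contra hne
    obtain ⟨A, heA, hA⟩ := exists_tight_of_isMaxOn_sum hxQ hmax ((hxQ.1.2 e).lt_of_ne hne)
    exact heT (mem_sup.2 ⟨A, mem_filter.2 ⟨mem_univ A, hA⟩, heA⟩)
  refine ⟨x, hxQ, le_antisymm (hxQ.2 univ) ?_⟩
  calc g univ ≤ g T + ∑ e ∈ Tᶜ, hi e := hcut T
    _ = ∑ e ∈ T, x e + ∑ e ∈ Tᶜ, x e := by
      rw [hT, sum_congr rfl fun e he => hTc e (mem_compl.1 he)]
    _ = ∑ e, x e := sum_add_sum_compl T x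

end SubmodularPolyhedron

section Polymatroid

variable {E : Type*} {f : Finset E → ℝ} {c : ℝ} {x : E → ℝ}

def polymatroidPolytope (f : Finset E → ℝ) : Set (E → ℝ) :=
  {x | (∀ e, 0 ≤ x e) ∧ ∀ A : Finset E, ∑ e ∈ A, x e ≤ f A}

theorem mem_smul_polymatroidPolytope_iff (hc : 0 < c) :
    x ∈ c • polymatroidPolytope f ↔
      (∀ e, 0 ≤ x e) ∧ ∀ A : Finset E, ∑ e ∈ A, x e ≤ c * f A := by
  rw [Set.mem_smul_set_iff_inv_smul_mem₀ hc.ne']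
  simp only [polymatroidPolytope, Set.mem_ofPred_eq, Pi.smul_apply, smul_eq_mul, ← mul_sum,
    inv_mul_le_iff₀ hc, mul_nonneg_iff_of_pos_left (inv_pos.2 hc)]

theorem mem_smul_polymatroidPolytope_of_le {y : E → ℝ} (hc : 0 < c) (hx : ∀ e, 0 ≤ x e)
    (hxy : x ≤ y) (hy : y ∈ c • polymatroidPolytope f) :
    x ∈ c • polymatroidPolytope f := by
  rw [mem_smul_polymatroidPolytope_iff hc] at hy ⊢
  exact ⟨hx, fun A => (sum_le_sum fun e _ => hxy e).trans (hy.2 A)⟩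

variable [Fintype E]

def basePolytope (f : Finset E → ℝ) : Set (E → ℝ) :=
  {x | x ∈ polymatroidPolytope f ∧ ∑ e : E, x e = f univ}

theorem mem_smul_basePolytope_iff (hc : 0 < c) :
    x ∈ c • basePolytope f ↔
      x ∈ c • polymatroidPolytope f ∧ ∑ e, x e = c * f univ := by
  rw [Set.mem_smul_set_iff_inv_smul_mem₀ hc.ne', Set.mem_smul_set_iff_inv_smul_mem₀ hc.ne']
  simp only [basePolytope, Set.mem_ofPred_eq, Pi.smul_apply, smul_eq_mul, ← mul_sum,
    inv_mul_eq_iff_eq_mul₀ hc.ne']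

theorem exists_mem_smul_basePolytope_between [DecidableEq E] {α h : ℝ} {s y : E → ℝ}
    (hf0 : f ∅ = 0) (hfmono : ∀ A B : Finset E, A ⊆ B → f A ≤ f B)
    (hfsub : ∀ A B : Finset E, f (A ∩ B) + f (A ∪ B) ≤ f A + f B)
    (hα : 0 < α) (hαh : α ≤ h) (hs : s ∈ α • polymatroidPolytope f)
    (hy : y ∈ h • basePolytope f) (hsy : s ≤ y) :
    ∃ x ∈ α • basePolytope f, s ≤ x ∧ x ≤ y := by
  rw [mem_smul_polymatroidPolytope_iff hα] at hs
  rw [mem_smul_basePolytope_iff (hα.trans_le hαh),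
    mem_smul_polymatroidPolytope_iff (hα.trans_le hαh)] at hy
  have hcut : ∀ T : Finset E, α * f univ ≤ α * f T + ∑ e ∈ Tᶜ, y e := fun T => by
    have := sum_add_sum_compl T y
    nlinarith [hy.1.2 T,
      mul_nonneg (sub_nonneg.2 hαh) (sub_nonneg.2 (hfmono T univ (subset_univ T)))]
  obtain ⟨x, ⟨⟨hsx, hxy⟩, hxα⟩, hxE⟩ := exists_mem_Icc_sum_eq (g := fun A => α * f A)
    (by simp [hf0]) (fun A B => by nlinarith [hfsub A B]) hsy hs.2 hcut
  refine ⟨x, ?_, hsx, hxy⟩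
  rw [mem_smul_basePolytope_iff hα, mem_smul_polymatroidPolytope_iff hα]
  exact ⟨⟨fun e => (hs.1 e).trans (hsx e), hxα⟩, hxE⟩

end Polymatroid

theorem stmt4_general {E : Type*} [Fintype E] [DecidableEq E]
    (f : Finset E → ℝ)
    (hf0 : f ∅ = 0)
    (hfmono : ∀ A B : Finset E, A ⊆ B → f A ≤ f B)
    (hfsub : ∀ A B : Finset E, f (A ∩ B) + f (A ∪ B) ≤ f A + f B)
    (Pf : Set (E → ℝ))
    (hPf : Pf = {x | (∀ e, 0 ≤ x e) ∧ ∀ A : Finset E, ∑ e ∈ A, x e ≤ f A})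
    (Bf : Set (E → ℝ))
    (hBf : Bf = {x | x ∈ Pf ∧ ∑ e : E, x e = f Finset.univ})
    (s : E → ℝ)
    (m : E → ℝ) (hm : ∀ e, 0 ≤ m e)
    (α : ℝ)
    (hα : IsLeast {h : ℝ | 0 < h ∧ s ∈ h • Pf} α)
    (A : ℝ → Set (E → ℝ))
    (hA : ∀ h : ℝ, A h = {z : E → ℝ | (∀ e, 0 ≤ z e) ∧ s + z ∈ h • Bf})
    (zα : E → ℝ)
    (hzα : zα ∈ A α ∧ ∀ z ∈ A α, ∑ e : E, m e * zα e ≤ ∑ e : E, m e * z e) :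
    (∀ h : ℝ, α ≤ h → ∀ zh : E → ℝ,
        (zh ∈ A h ∧ ∀ z ∈ A h, ∑ e : E, m e * zh e ≤ ∑ e : E, m e * z e) →
        ∑ e : E, m e * zα e ≤ ∑ e : E, m e * zh e) ∧
    (∀ z : E → ℝ, (∃ h : ℝ, 0 < h ∧ z ∈ A h) →
        ∑ e : E, m e * zα e ≤ ∑ e : E, m e * z e) := by
  obtain rfl : Pf = polymatroidPolytope f := hPf
  obtain rfl : Bf = basePolytope f := hBf
  obtain ⟨⟨hα0, hsα⟩, hα_min⟩ := hα
  have hs0 : ∀ e, 0 ≤ s e := ((mem_smul_polymatroidPolytope_iff hα0).1 hsα).1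
  have reinforce : ∀ z : E → ℝ, (∃ h : ℝ, 0 < h ∧ z ∈ A h) →
      ∑ e : E, m e * zα e ≤ ∑ e : E, m e * z e := by
    rintro z ⟨h, hh, hzA⟩
    rw [hA] at hzA
    obtain ⟨hz0, hszB⟩ := hzA
    have hsz : s ≤ s + z := le_add_of_nonneg_right hz0
    have hαh : α ≤ h := hα_min ⟨hh, mem_smul_polymatroidPolytope_of_le hh hs0 hsz
      ((mem_smul_basePolytope_iff hh).1 hszB).1⟩
    obtain ⟨x, hxB, hsx, hxsz⟩ :=
      exists_mem_smul_basePolytope_between hf0 hfmono hfsub hα0 hαh hsα hszB hsz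
    have hxA : x - s ∈ A α := by
      rw [hA]
      exact ⟨fun e => sub_nonneg.2 (hsx e), by rwa [add_sub_cancel]⟩
    calc ∑ e, m e * zα e ≤ ∑ e, m e * (x - s) e := hzα.2 _ hxA
      _ ≤ ∑ e, m e * z e := sum_le_sum fun e _ =>
        mul_le_mul_of_nonneg_left (sub_le_iff_le_add'.2 (hxsz e)) (hm e)
  exact ⟨fun h hαh zh hzh => reinforce zh ⟨h, hα0.trans_le hαh, hzh.1⟩, reinforce⟩

/-- For `h ≥ α`, any minimizer `z*_h` of `m·z` over
`A_h = {z ≥ 0 : s + z ∈ h·B_f}` satisfies `m·z*_h ≥ m·z*_α`; in particular, the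
polymatroid reinforcement problem `min{m·z : z ≥ 0, s + z ∈ h·B_f for some h > 0}`
is attained on `A_α`, where `α = min{h > 0 : s ∈ h·P_f}`. -/
theorem stmt4 {E : Type*} [Fintype E] [DecidableEq E]
    (f : Finset E → ℝ)
    (hf0 : f ∅ = 0)
    (hfmono : ∀ A B : Finset E, A ⊆ B → f A ≤ f B)
    (hfsub : ∀ A B : Finset E, f (A ∩ B) + f (A ∪ B) ≤ f A + f B)
    (Pf : Set (E → ℝ))
    (hPf : Pf = {x | (∀ e, 0 ≤ x e) ∧ ∀ A : Finset E, ∑ e ∈ A, x e ≤ f A})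
    (Bf : Set (E → ℝ))
    (hBf : Bf = {x | x ∈ Pf ∧ ∑ e : E, x e = f Finset.univ})
    (s : E → ℝ) (hspos : ∀ e, 0 < s e)
    (m : E → ℝ) (hm : ∀ e, 0 ≤ m e)
    (α : ℝ)
    (hα : IsLeast {h : ℝ | 0 < h ∧ s ∈ h • Pf} α)
    (A : ℝ → Set (E → ℝ))
    (hA : ∀ h : ℝ, A h = {z : E → ℝ | (∀ e, 0 ≤ z e) ∧ s + z ∈ h • Bf})
    (zα : E → ℝ)
    (hzα : zα ∈ A α ∧ ∀ z ∈ A α, ∑ e : E, m e * zα e ≤ ∑ e : E, m e * z e) :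
    (∀ h : ℝ, α ≤ h → ∀ zh : E → ℝ,
        (zh ∈ A h ∧ ∀ z ∈ A h, ∑ e : E, m e * zh e ≤ ∑ e : E, m e * z e) →
        ∑ e : E, m e * zα e ≤ ∑ e : E, m e * zh e) ∧
    (∀ z : E → ℝ, (∃ h : ℝ, 0 < h ∧ z ∈ A h) →
        ∑ e : E, m e * zα e ≤ ∑ e : E, m e * z e) :=
  stmt4_general f hf0 hfmono hfsub Pf hPf Bf hBf s m hm α hα A hA zα hzα
end

section
/- Let f be a polymatroid function on E, g(U) = f(E) − f(E∖U), Q_g = {x ∈ ℝ^E : x ≥ 0, x(A) ≥ g(A) ∀A ⊆ E}, and C_g = {x ∈ Q_g : x(E) = g(E)}. Then Q_g = C_g + ℝ^E_{≥0}. -/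
/-!
Since `f` is submodular and nondecreasing, `g` is supermodular, `g ∅ = 0` and `g ≥ 0`.
Starting from `x ∈ Q_g`, lower the coordinates one at a time, each as far as feasibility allows.
A coordinate lowered this way lies in a tight set (`y(A) = g(A)`); tight sets stay tight
as the other coordinates decrease, and by supermodularity the union of two tight sets is tight.
Once every coordinate has been lowered, `E` itself is tight, so the result lies in `C_g`
and lies below `x`.
-/

open Finset Function

section Supermodular

variable {E : Type*} {g : Finset E → ℝ}

theorem sum_eq_of_le_of_sum_eq {y y' : E → ℝ} (hle : y' ≤ y)
    (hy' : ∀ A, g A ≤ ∑ e ∈ A, y' e) {A : Finset E} (hA : ∑ e ∈ A, y e = g A) :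
    ∑ e ∈ A, y' e = g A :=
  le_antisymm (hA ▸ sum_le_sum fun e _ => hle e) (hy' A)

variable [DecidableEq E]

theorem sum_union_eq_of_supermodular
    (hsup : ∀ A B : Finset E, g A + g B ≤ g (A ∪ B) + g (A ∩ B))
    {y : E → ℝ} (hy : ∀ A, g A ≤ ∑ e ∈ A, y e) {A B : Finset E}
    (hA : ∑ e ∈ A, y e = g A) (hB : ∑ e ∈ B, y e = g B) :
    ∑ e ∈ A ∪ B, y e = g (A ∪ B) := by
  have := sum_union_inter (s₁ := A) (s₂ := B) (f := y)
  linarith [hy (A ∪ B), hy (A ∩ B), hsup A B]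

/-- The new value of `y e` is the largest deficit `g A - y(A \ {e})` over the sets `A ∋ e`;
a set attaining it becomes tight, and the singleton `{e}` keeps it nonnegative. -/
theorem exists_update_le_sum_eq [Fintype E] (hg : ∀ e, 0 ≤ g {e})
    {y : E → ℝ} (hy : ∀ A, g A ≤ ∑ e ∈ A, y e) (e : E) :
    ∃ v, 0 ≤ v ∧ v ≤ y e ∧ (∀ A, g A ≤ ∑ a ∈ A, update y e v a) ∧
      ∃ A, e ∈ A ∧ ∑ a ∈ A, update y e v a = g A := by
  set deficit := fun A : Finset E => g A - ∑ a ∈ A \ {e}, y a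
  obtain ⟨A₀, hA₀, hmax⟩ :=
    (univ.filter (e ∈ ·)).exists_max_image deficit ⟨{e}, by simp⟩
  simp only [mem_filter, mem_univ, true_and] at hA₀ hmax
  have hsum_update : ∀ A, e ∈ A →
      ∑ a ∈ A, update y e (deficit A₀) a = deficit A₀ + ∑ a ∈ A \ {e}, y a :=
    fun A hA => sum_update_of_mem hA y _
  refine ⟨deficit A₀, ?_, ?_, fun A => ?_, A₀, hA₀, ?_⟩
  · exact (hg e).trans (by simpa [deficit] using hmax {e} (mem_singleton_self e))
  · linarith [hy A₀, sum_eq_add_sum_sdiff_singleton_of_mem hA₀ y]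
  · by_cases he : e ∈ A
    · rw [hsum_update A he]
      linarith [hmax A he]
    · rw [sum_update_of_notMem he]
      exact hy A
  · rw [hsum_update A₀ hA₀]
    ring

theorem exists_le_subset_sum_eq [Fintype E]
    (hsup : ∀ A B : Finset E, g A + g B ≤ g (A ∪ B) + g (A ∩ B))
    (hg0 : g ∅ = 0) (hg : ∀ e, 0 ≤ g {e})
    {x : E → ℝ} (hx0 : ∀ e, 0 ≤ x e) (hx : ∀ A, g A ≤ ∑ e ∈ A, x e) (S : Finset E) :
    ∃ y : E → ℝ, (∀ e, 0 ≤ y e) ∧ (∀ A, g A ≤ ∑ e ∈ A, y e) ∧ y ≤ x ∧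
      ∃ T, S ⊆ T ∧ ∑ e ∈ T, y e = g T := by
  induction S using Finset.induction with
  | empty => exact ⟨x, hx0, hx, le_rfl, ∅, subset_rfl, by simp [hg0]⟩
  | @insert e S _ ih =>
    obtain ⟨y, hy0, hy, hyx, T, hST, hT⟩ := ih
    obtain ⟨v, hv0, hvy, hy', A, heA, hA⟩ := exists_update_le_sum_eq hg hy e
    have hle : update y e v ≤ y := update_le_iff.2 ⟨hvy, fun _ _ => le_rfl⟩
    refine ⟨update y e v, fun a => ?_, hy', hle.trans hyx, A ∪ T, ?_, ?_⟩
    · rcases eq_or_ne a e with rfl | ha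
      · simpa using hv0
      · simpa [ha] using hy0 a
    · exact insert_subset (mem_union_left _ heA) (hST.trans subset_union_right)
    · exact sum_union_eq_of_supermodular hsup hy' hA (sum_eq_of_le_of_sum_eq hle hy' hT)

theorem exists_le_sum_univ_eq [Fintype E]
    (hsup : ∀ A B : Finset E, g A + g B ≤ g (A ∪ B) + g (A ∩ B))
    (hg0 : g ∅ = 0) (hg : ∀ e, 0 ≤ g {e})
    {x : E → ℝ} (hx0 : ∀ e, 0 ≤ x e) (hx : ∀ A, g A ≤ ∑ e ∈ A, x e) :
    ∃ y : E → ℝ, (∀ e, 0 ≤ y e) ∧ (∀ A, g A ≤ ∑ e ∈ A, y e) ∧ y ≤ x ∧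
      ∑ e, y e = g univ := by
  obtain ⟨y, hy0, hy, hyx, T, hT, hTy⟩ := exists_le_subset_sum_eq hsup hg0 hg hx0 hx univ
  rw [univ_subset_iff.1 hT] at hTy
  exact ⟨y, hy0, hy, hyx, hTy⟩

end Supermodular

theorem supermodular_sub_compl {E : Type*} [Fintype E] [DecidableEq E] {f : Finset E → ℝ}
    (hfsub : ∀ A B : Finset E, f (A ∩ B) + f (A ∪ B) ≤ f A + f B) (A B : Finset E) :
    (f univ - f (univ \ A)) + (f univ - f (univ \ B)) ≤
      (f univ - f (univ \ (A ∪ B))) + (f univ - f (univ \ (A ∩ B))) := by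
  have := hfsub (univ \ A) (univ \ B)
  rw [← sdiff_union_distrib, ← sdiff_inter_distrib_right] at this
  linarith

theorem stmt8_general {E : Type*} [Fintype E] [DecidableEq E]
    (f : Finset E → ℝ)
    (hfmono : ∀ A B : Finset E, A ⊆ B → f A ≤ f B)
    (hfsub : ∀ A B : Finset E, f (A ∩ B) + f (A ∪ B) ≤ f A + f B)
    (g : Finset E → ℝ)
    (hg : g = fun U => f Finset.univ - f (Finset.univ \ U))
    (Qg : Set (E → ℝ))
    (hQg : Qg = {x | (∀ e, 0 ≤ x e) ∧ ∀ A : Finset E, g A ≤ ∑ e ∈ A, x e})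
    (Cg : Set (E → ℝ))
    (hCg : Cg = {x | x ∈ Qg ∧ ∑ e : E, x e = g Finset.univ}) :
    Qg = {x | ∃ y ∈ Cg, ∃ r : E → ℝ, (∀ e, 0 ≤ r e) ∧ x = y + r} := by
  subst hCg hQg hg
  ext x
  constructor
  · rintro ⟨hx0, hx⟩
    obtain ⟨y, hy0, hy, hyx, hyE⟩ := exists_le_sum_univ_eq (supermodular_sub_compl hfsub)
      (by simp) (fun e => sub_nonneg.2 (hfmono _ _ sdiff_subset)) hx0 hx
    exact ⟨y, ⟨⟨hy0, hy⟩, hyE⟩, x - y, fun e => sub_nonneg.2 (hyx e), (add_sub_cancel y x).symm⟩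
  · rintro ⟨y, ⟨⟨hy0, hy⟩, -⟩, r, hr, rfl⟩
    refine ⟨fun e => add_nonneg (hy0 e) (hr e), fun A => ?_⟩
    simp only [Pi.add_apply, sum_add_distrib]
    linarith [hy A, sum_nonneg fun e (_ : e ∈ A) => hr e]

/-- With `g(U) = f(E) − f(E∖U)`,
`Q_g = {x ≥ 0 : x(A) ≥ g(A) ∀A}` and `C_g = {x ∈ Q_g : x(E) = g(E)}`,
we have `Q_g = C_g + ℝ^E_{≥0}`. -/
theorem stmt8 {E : Type*} [Fintype E] [DecidableEq E]
    (f : Finset E → ℝ)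
    (hf0 : f ∅ = 0)
    (hfmono : ∀ A B : Finset E, A ⊆ B → f A ≤ f B)
    (hfsub : ∀ A B : Finset E, f (A ∩ B) + f (A ∪ B) ≤ f A + f B)
    (g : Finset E → ℝ)
    (hg : g = fun U => f Finset.univ - f (Finset.univ \ U))
    (Qg : Set (E → ℝ))
    (hQg : Qg = {x | (∀ e, 0 ≤ x e) ∧ ∀ A : Finset E, g A ≤ ∑ e ∈ A, x e})
    (Cg : Set (E → ℝ))
    (hCg : Cg = {x | x ∈ Qg ∧ ∑ e : E, x e = g Finset.univ}) :
    Qg = {x | ∃ y ∈ Cg, ∃ r : E → ℝ, (∀ e, 0 ≤ r e) ∧ x = y + r} :=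
  stmt8_general f hfmono hfsub g hg Qg hQg Cg hCg
end

section
/- Let f be a polymatroid function on E with g(U) = f(E) − f(E∖U), and let s ∈ ℝ^E_{>0}. Define α = min{h > 0 : s ∈ h·P_f} and β = max{h > 0 : s ∈ h·Q_g}. Then α ≥ β, and for h > 0, s ∈ h·B_f if and only if h = α = β. -/
/-!
Scaling turns membership `s ∈ h • P` into the inequalities `s(A) ≤ h f(A)` (resp. `h g(A) ≤ s(A)`).
At `A = E` they give `β f(E) ≤ s(E) ≤ α f(E)`, hence `β ≤ α`. If `s ∈ h • B_f`, then
`s(A) = h f(E) - s(E \ A) ≥ h (f(E) - f(E \ A)) = h g(A)`, so `s ∈ h • P_f ∩ h • Q_g` and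
`α ≤ h ≤ β ≤ α`. Conversely, if `α = β = h`, then `s ∈ h • P_f` and `s(E) = h f(E)`.
-/

open Finset
open scoped Pointwise

section

variable {E : Type*} {h : ℝ} {s : E → ℝ}

theorem mem_smul_setOf_sum_le_iff (f : Finset E → ℝ) (hh : 0 < h) :
    s ∈ h • {x : E → ℝ | (∀ e, 0 ≤ x e) ∧ ∀ A : Finset E, ∑ e ∈ A, x e ≤ f A} ↔
      (∀ e, 0 ≤ s e) ∧ ∀ A : Finset E, ∑ e ∈ A, s e ≤ h * f A := by
  simp only [Set.mem_smul_set_iff_inv_smul_mem₀ hh.ne', Set.mem_ofPred_eq, Pi.smul_apply,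
    smul_eq_mul, ← Finset.mul_sum, inv_mul_le_iff₀ hh, mul_nonneg_iff_of_pos_left (inv_pos.2 hh)]

theorem mem_smul_setOf_le_sum_iff (g : Finset E → ℝ) (hh : 0 < h) :
    s ∈ h • {x : E → ℝ | (∀ e, 0 ≤ x e) ∧ ∀ A : Finset E, g A ≤ ∑ e ∈ A, x e} ↔
      (∀ e, 0 ≤ s e) ∧ ∀ A : Finset E, h * g A ≤ ∑ e ∈ A, s e := by
  simp only [Set.mem_smul_set_iff_inv_smul_mem₀ hh.ne', Set.mem_ofPred_eq, Pi.smul_apply,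
    smul_eq_mul, ← Finset.mul_sum, le_inv_mul_iff₀ hh, mul_zero]

theorem mem_smul_setOf_sum_eq_iff [Fintype E] (P : Set (E → ℝ)) (c : ℝ) (hh : 0 < h) :
    s ∈ h • {x | x ∈ P ∧ ∑ e, x e = c} ↔ s ∈ h • P ∧ ∑ e, s e = h * c := by
  simp only [Set.mem_smul_set_iff_inv_smul_mem₀ hh.ne', Set.mem_ofPred_eq, Pi.smul_apply,
    smul_eq_mul, ← Finset.mul_sum, inv_mul_eq_iff_eq_mul₀ hh.ne']

theorem mul_sub_le_sum_of_sum_le_of_sum_eq [Fintype E] [DecidableEq E] (f : Finset E → ℝ)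
    (hle : ∀ A : Finset E, ∑ e ∈ A, s e ≤ h * f A) (heq : ∑ e, s e = h * f univ)
    (A : Finset E) : h * (f univ - f (univ \ A)) ≤ ∑ e ∈ A, s e := by
  have hsplit : ∑ e ∈ univ \ A, s e + ∑ e ∈ A, s e = ∑ e, s e := sum_sdiff (subset_univ A)
  linarith [hle (univ \ A)]

end

theorem stmt11_general {E : Type*} [Fintype E] [DecidableEq E]
    (f : Finset E → ℝ)
    (hf0 : f ∅ = 0)
    (hfE : 0 < f Finset.univ)
    (g : Finset E → ℝ)
    (hg : g = fun U => f Finset.univ - f (Finset.univ \ U))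
    (Pf Bf Qg : Set (E → ℝ))
    (hPf : Pf = {x | (∀ e, 0 ≤ x e) ∧ ∀ A : Finset E, ∑ e ∈ A, x e ≤ f A})
    (hBf : Bf = {x | x ∈ Pf ∧ ∑ e : E, x e = f Finset.univ})
    (hQg : Qg = {x | (∀ e, 0 ≤ x e) ∧ ∀ A : Finset E, g A ≤ ∑ e ∈ A, x e})
    (s : E → ℝ)
    (α β : ℝ)
    (hα : IsLeast {h : ℝ | 0 < h ∧ s ∈ h • Pf} α)
    (hβ : IsGreatest {h : ℝ | 0 < h ∧ s ∈ h • Qg} β) :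
    β ≤ α ∧ ∀ h : ℝ, 0 < h → (s ∈ h • Bf ↔ h = α ∧ h = β) := by
  subst hPf hBf hQg hg
  obtain ⟨⟨hαpos, hsα⟩, hαmin⟩ := hα
  obtain ⟨⟨hβpos, hsβ⟩, hβmax⟩ := hβ
  obtain ⟨hs, hsαle⟩ := (mem_smul_setOf_sum_le_iff f hαpos).1 hsα
  have hsβle := ((mem_smul_setOf_le_sum_iff _ hβpos).1 hsβ).2 univ
  rw [sdiff_self, bot_eq_empty, hf0, sub_zero] at hsβle
  have hβα : β ≤ α := le_of_mul_le_mul_right (hsβle.trans (hsαle univ)) hfE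
  refine ⟨hβα, fun h hh => ?_⟩
  rw [mem_smul_setOf_sum_eq_iff _ _ hh, mem_smul_setOf_sum_le_iff f hh]
  constructor
  · rintro ⟨⟨-, hle⟩, heq⟩
    have hαh : α ≤ h := hαmin ⟨hh, (mem_smul_setOf_sum_le_iff f hh).2 ⟨hs, hle⟩⟩
    have hhβ : h ≤ β := hβmax ⟨hh, (mem_smul_setOf_le_sum_iff _ hh).2
      ⟨hs, mul_sub_le_sum_of_sum_le_of_sum_eq f hle heq⟩⟩
    exact ⟨by linarith, by linarith⟩
  · rintro ⟨rfl, hαβ⟩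
    exact ⟨⟨hs, hsαle⟩, le_antisymm (hsαle univ) (hαβ ▸ hsβle)⟩

/-- For `s ∈ ℝ^E_{>0}`, with `α = min{h > 0 : s ∈ h·P_f}` and
`β = max{h > 0 : s ∈ h·Q_g}`, we have `α ≥ β`, and for `h > 0`,
`s ∈ h·B_f` iff `h = α = β`. -/
theorem stmt11 {E : Type*} [Fintype E] [DecidableEq E]
    (f : Finset E → ℝ)
    (hf0 : f ∅ = 0)
    (hfmono : ∀ A B : Finset E, A ⊆ B → f A ≤ f B)
    (hfsub : ∀ A B : Finset E, f (A ∩ B) + f (A ∪ B) ≤ f A + f B)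
    (hfE : 0 < f Finset.univ)
    (g : Finset E → ℝ)
    (hg : g = fun U => f Finset.univ - f (Finset.univ \ U))
    (Pf Bf Qg : Set (E → ℝ))
    (hPf : Pf = {x | (∀ e, 0 ≤ x e) ∧ ∀ A : Finset E, ∑ e ∈ A, x e ≤ f A})
    (hBf : Bf = {x | x ∈ Pf ∧ ∑ e : E, x e = f Finset.univ})
    (hQg : Qg = {x | (∀ e, 0 ≤ x e) ∧ ∀ A : Finset E, g A ≤ ∑ e ∈ A, x e})
    (s : E → ℝ) (hspos : ∀ e, 0 < s e)
    (α β : ℝ)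
    (hα : IsLeast {h : ℝ | 0 < h ∧ s ∈ h • Pf} α)
    (hβ : IsGreatest {h : ℝ | 0 < h ∧ s ∈ h • Qg} β) :
    β ≤ α ∧ ∀ h : ℝ, 0 < h → (s ∈ h • Bf ↔ h = α ∧ h = β) :=
  stmt11_general f hf0 hfE g hg Pf Bf Qg hPf hBf hQg s α β hα hβ
end

section
/- In the setting of the fractional-arboricity iteration: let g(b) = min{b(|B|−1) − σ(E_B) : B ⊆ V, |B| ≥ 2}. Suppose g(b_0) < 0 with minimizer B_0, set b_1 = σ(E_{B_0})/(|B_0|−1), and suppose g(b_1) < 0 with minimizer B_1. Then |B_1| < |B_0|. Consequently, the iteration b ↦ σ(E_B)/(|B|−1) with B a minimizer of g(b) terminates in at most |V| steps. -/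
/-!
Along the line `b ↦ b (|B| - 1) - σ(E_B)` the slope is `|B| - 1`, so the minimizer size can only
drop as `b` grows: if `B₀` minimizes at `b₀` and `B₁` beats `B₀` at some `b₁ > b₀`, then `B₁` must
have the smaller slope. Here `b₁ > b₀` because `g(b₀) < 0`, and `B₁` beats `B₀` at `b₁` because
`B₀` has value `0` there while `g(b₁) < 0`.
-/

open Finset
open scoped Classical

/-- The set of edges with both endpoints in `B`. -/
noncomputable def edgesIn {V E : Type*} [Fintype E] (ends : E → Sym2 V)
    (B : Finset V) : Finset E :=
  Finset.univ.filter (fun e => ∀ v ∈ ends e, v ∈ B)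

theorem lt_of_sub_le_of_sub_lt {R : Type*} [CommRing R] [LinearOrder R] [IsStrictOrderedRing R]
    {b₀ b₁ n₀ n₁ s₀ s₁ : R} (hb : b₀ < b₁) (h₀ : b₀ * n₀ - s₀ ≤ b₀ * n₁ - s₁)
    (h₁ : b₁ * n₁ - s₁ < b₁ * n₀ - s₀) : n₁ < n₀ := by
  have hprod : (b₁ - b₀) * (n₁ - n₀) < 0 := by linear_combination h₁ + h₀
  exact sub_neg.1 (neg_of_mul_neg_right hprod (sub_pos.2 hb).le)

theorem stmt17_general {V E : Type*} [Fintype E]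
    (ends : E → Sym2 V)
    (σ : E → ℝ)
    (b₀ b₁ : ℝ) (B₀ B₁ : Finset V)
    (hB₀card : 2 ≤ B₀.card) (hB₁card : 2 ≤ B₁.card)
    (hB₀min : ∀ B : Finset V, 2 ≤ B.card →
      b₀ * ((B₀.card : ℝ) - 1) - ∑ e ∈ edgesIn ends B₀, σ e ≤
        b₀ * ((B.card : ℝ) - 1) - ∑ e ∈ edgesIn ends B, σ e)
    (hg₀ : b₀ * ((B₀.card : ℝ) - 1) - ∑ e ∈ edgesIn ends B₀, σ e < 0)
    (hb₁ : b₁ = (∑ e ∈ edgesIn ends B₀, σ e) / ((B₀.card : ℝ) - 1))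
    (hg₁ : b₁ * ((B₁.card : ℝ) - 1) - ∑ e ∈ edgesIn ends B₁, σ e < 0) :
    B₁.card < B₀.card := by
  have hn₀ : (0 : ℝ) < B₀.card - 1 := by
    have : (2 : ℝ) ≤ B₀.card := by exact_mod_cast hB₀card
    linarith
  have hb : b₀ < b₁ := hb₁ ▸ (lt_div_iff₀ hn₀).2 (by linarith)
  have hB₀_zero : b₁ * ((B₀.card : ℝ) - 1) - ∑ e ∈ edgesIn ends B₀, σ e = 0 := by
    rw [hb₁, div_mul_cancel₀ _ hn₀.ne', sub_self]
  have hcard := lt_of_sub_le_of_sub_lt hb (hB₀min B₁ hB₁card) (hB₀_zero ▸ hg₁)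
  exact_mod_cast sub_lt_sub_iff_right (1 : ℝ) |>.1 hcard

/-- In the fractional-arboricity iteration with
`g(b) = min{b(|B|−1) − σ(E_B) : B ⊆ V, |B| ≥ 2}`: if `g(b₀) < 0` with minimizer
`B₀`, `b₁ = σ(E_{B₀})/(|B₀|−1)`, and `g(b₁) < 0` with minimizer `B₁`, then
`|B₁| < |B₀|` (hence the iteration terminates in at most `|V|` steps). -/
theorem stmt17 {V E : Type*} [Fintype V] [Fintype E] [DecidableEq V]
    (ends : E → Sym2 V)
    (σ : E → ℝ) (hσ : ∀ e, 0 < σ e)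
    (b₀ b₁ : ℝ) (B₀ B₁ : Finset V)
    (hB₀card : 2 ≤ B₀.card) (hB₁card : 2 ≤ B₁.card)
    (hB₀min : ∀ B : Finset V, 2 ≤ B.card →
      b₀ * ((B₀.card : ℝ) - 1) - ∑ e ∈ edgesIn ends B₀, σ e ≤
        b₀ * ((B.card : ℝ) - 1) - ∑ e ∈ edgesIn ends B, σ e)
    (hg₀ : b₀ * ((B₀.card : ℝ) - 1) - ∑ e ∈ edgesIn ends B₀, σ e < 0)
    (hb₁ : b₁ = (∑ e ∈ edgesIn ends B₀, σ e) / ((B₀.card : ℝ) - 1))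
    (hB₁min : ∀ B : Finset V, 2 ≤ B.card →
      b₁ * ((B₁.card : ℝ) - 1) - ∑ e ∈ edgesIn ends B₁, σ e ≤
        b₁ * ((B.card : ℝ) - 1) - ∑ e ∈ edgesIn ends B, σ e)
    (hg₁ : b₁ * ((B₁.card : ℝ) - 1) - ∑ e ∈ edgesIn ends B₁, σ e < 0) :
    B₁.card < B₀.card :=
  stmt17_general ends σ b₀ b₁ B₀ B₁ hB₀card hB₁card hB₀min hg₀ hb₁ hg₁
end
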